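/- For each positive integer k, the fractional multipacking number of G_k (3k pentagons A_i = (a_i, b_i, c_i, d_i, e_i, a_i) joined by edges b_i e_{i+1}) is at least 4k; in particular, the weight function w assigning 1/3 to each of b_i, c_i, d_i, e_i for all i (and 0 to each a_i) is a fractional multipacking of total weight 4k. -/

import Mathlib

open SimpleGraph

variable {V : Type*}

/-- `p` restricted to `{0,…,k}` is an isometric path of length `k` in `G`. -/
def IsIsomPath (G : SimpleGraph V) (p : ℕ → V) (k : ℕ) : Prop :=
  ∀ i j, i ≤ k → j ≤ k → G.dist (p i) (p j) = max i j - min i j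

def pathVerts (p : ℕ → V) (k : ℕ) : Set V := {x | ∃ i, i ≤ k ∧ p i = x}

noncomputable def ecc (G : SimpleGraph V) [Fintype V] (v : V) : ℕ :=
  Finset.univ.sup (fun u => G.dist v u)

noncomputable def grad (G : SimpleGraph V) [Fintype V] : ℕ :=
  sInf (Set.range (ecc G))

noncomputable def gdiam (G : SimpleGraph V) [Fintype V] : ℕ :=
  Finset.univ.sup (fun v => ecc G v)

def IsMultipacking (G : SimpleGraph V) [Fintype V] (M : Set V) : Prop :=
  ∀ v : V, ∀ r : ℕ, 1 ≤ r → r ≤ gdiam G →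
    (M ∩ {u | G.dist v u ≤ r}).ncard ≤ r

noncomputable def mp (G : SimpleGraph V) [Fintype V] : ℕ :=
  sSup {n | ∃ M : Set V, IsMultipacking G M ∧ M.ncard = n}

def IsDomBroadcast (G : SimpleGraph V) [Fintype V] (f : V → ℕ) : Prop :=
  (∀ v, f v ≤ gdiam G) ∧ ∀ u : V, ∃ v : V, 1 ≤ f v ∧ G.dist u v ≤ f v

noncomputable def gammaB (G : SimpleGraph V) [Fintype V] : ℕ :=
  sInf {n | ∃ f : V → ℕ, IsDomBroadcast G f ∧ ∑ v, f v = n}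

noncomputable def gammaDom (G : SimpleGraph V) [Fintype V] : ℕ :=
  sInf {n | ∃ D : Finset V, (∀ u : V, ∃ v ∈ D, u = v ∨ G.Adj u v) ∧ D.card = n}

def IsFracMP (G : SimpleGraph V) [Fintype V] (w : V → ℝ) : Prop :=
  (∀ v, 0 ≤ w v) ∧ ∀ v : V, ∀ r : ℕ, 1 ≤ r →
    (∑ u ∈ Finset.univ.filter (fun u => G.dist v u ≤ r), w u) ≤ r

noncomputable def mpf (G : SimpleGraph V) [Fintype V] : ℝ :=
  sSup {s | ∃ w : V → ℝ, IsFracMP G w ∧ ∑ v, w v = s}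

/-- A cactus: connected and every edge lies on at most one cycle. -/
def IsCactus (G : SimpleGraph V) : Prop :=
  G.Connected ∧ ∀ (u v : V) (c₁ : G.Walk u u) (c₂ : G.Walk v v),
    c₁.IsCycle → c₂.IsCycle → ∀ e, e ∈ c₁.edges → e ∈ c₂.edges →
      (∀ e', e' ∈ c₁.edges ↔ e' ∈ c₂.edges)

def pentRel (k : ℕ) (x y : Fin (3*k) × Fin 5) : Prop :=
  (x.1 = y.1 ∧ (x.2.val + 1) % 5 = y.2.val) ∨
  (x.1.val + 1 = y.1.val ∧ x.2.val = 1 ∧ y.2.val = 4)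

def Gk (k : ℕ) : SimpleGraph (Fin (3*k) × Fin 5) := SimpleGraph.fromRel (pentRel k)

/-!
Vertex `(i, j)` of `Gk k` is entry `j` (from 0) of `a_i b_i c_i d_i e_i`. Weight `1/3` sits on every vertex
except the `a_i`. The weighted vertices, read in the order
`e_0 d_0 c_0 b_0 e_1 d_1 …`, form a path of `G_k`, and the only shortcuts are the detours
`e_i a_i b_i` of length 2 around the three edges `e_i d_i c_i b_i`. A closed form `gkDist` that
changes by at most one along every edge is a lower bound for the graph distance, and from it one
reads off that the weighted vertices of any ball of radius `r ≥ 1` lie in a window of `3r`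
consecutive positions of that path, except for the ball of radius 1 around `a_i`, which holds only
`b_i` and `e_i`. Hence every ball of radius `r` has weight at most `r`.
-/

open Finset

namespace SimpleGraph

variable {G : SimpleGraph V} {f : V → ℕ}

theorem Walk.apply_le_apply_add_length (hf : ∀ x y, G.Adj x y → f x ≤ f y + 1) :
    ∀ {u v : V} (p : G.Walk u v), f u ≤ f v + p.length
  | _, _, .nil => by simp
  | _, _, .cons h p => by
    have := hf _ _ h
    have := p.apply_le_apply_add_length hf
    rw [length_cons]
    omega

theorem Reachable.apply_le_apply_add_dist (hf : ∀ x y, G.Adj x y → f x ≤ f y + 1) {u v : V}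
    (h : G.Reachable u v) : f u ≤ f v + G.dist u v := by
  obtain ⟨p, hp⟩ := h.exists_walk_length_eq_dist
  exact hp ▸ p.apply_le_apply_add_length hf

end SimpleGraph

section FracMP

variable {G : SimpleGraph V} [Fintype V] {w : V → ℝ}

theorem IsFracMP.le_one (hw : IsFracMP G w) (v : V) : w v ≤ 1 := by
  have hv : v ∈ univ.filter (fun u => G.dist v u ≤ 1) := by simp
  simpa using (single_le_sum (fun u _ => hw.1 u) hv).trans (hw.2 v 1 le_rfl)

theorem IsFracMP.sum_le_mpf (hw : IsFracMP G w) : ∑ v, w v ≤ mpf G := by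
  refine le_csSup ⟨Fintype.card V, ?_⟩ ⟨w, hw, rfl⟩
  rintro _ ⟨w', hw', rfl⟩
  simpa using sum_le_card_nsmul univ w' 1 fun v _ => hw'.le_one v

end FracMP

theorem Finset.card_le_succ_of_forall_le_add (s : Finset ℕ) (d : ℕ)
    (h : ∀ a ∈ s, ∀ b ∈ s, a ≤ b + d) : #s ≤ d + 1 := by
  rcases s.eq_empty_or_nonempty with rfl | hs
  · simp
  calc #s ≤ #(Icc (s.min' hs) (s.min' hs + d)) :=
        card_le_card fun a ha => mem_Icc.2 ⟨min'_le _ _ ha, h _ ha _ (min'_mem _ _)⟩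
    _ = d + 1 := by rw [Nat.card_Icc]; omega

def c5Dist (a b : ℕ) : ℕ := min ((a - b) + (b - a)) (5 - ((a - b) + (b - a)))

/-- From pentagon `i` to a later pentagon `i'` one leaves through `b_i`, crosses each pentagon in
between along `e a b` and enters through `e_{i'}`. -/
def gkDist (i j i' j' : ℕ) : ℕ :=
  if i = i' then c5Dist j j'
  else if i < i' then c5Dist j 1 + 1 + 3 * (i' - i - 1) + c5Dist 4 j'
  else c5Dist j 4 + 1 + 3 * (i - i' - 1) + c5Dist 1 j'

/-- For `j ≠ 0`, the position of `(i, j)` on the path `e_0 d_0 c_0 b_0 e_1 d_1 …`. -/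
def spineIndex (i j : ℕ) : ℕ := 4 * i + 4 - j

theorem gkDist_self (i j : ℕ) : gkDist i j i j = 0 := by simp [gkDist, c5Dist]

theorem gkDist_le_succ_of_step {a b a' b' i j : ℕ} (hb : b < 5) (hb' : b' < 5) (hj : j < 5)
    (h : (a = a' ∧ (b + 1) % 5 = b') ∨ (a + 1 = a' ∧ b = 1 ∧ b' = 4)) :
    gkDist a b i j ≤ gkDist a' b' i j + 1 ∧ gkDist a' b' i j ≤ gkDist a b i j + 1 := by
  unfold gkDist c5Dist
  rcases h with ⟨rfl, h⟩ | ⟨rfl, rfl, rfl⟩ <;> constructor <;> split_ifs <;> omega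

set_option maxHeartbeats 1000000 in
theorem spineIndex_le_add_of_gkDist_le {i j a b a' b' r : ℕ} (hj : j < 5) (hb : b < 5)
    (hb' : b' < 5) (hb0 : b ≠ 0) (hb'0 : b' ≠ 0) (hne : ¬(j = 0 ∧ r = 1))
    (h : gkDist i j a b ≤ r) (h' : gkDist i j a' b' ≤ r) :
    spineIndex a b ≤ spineIndex a' b' + (3 * r - 1) := by
  unfold gkDist c5Dist at h h'
  unfold spineIndex
  interval_cases j <;> split_ifs at h h' <;> omega

theorem eq_and_of_gkDist_zero_le_one {i a b : ℕ} (hb : b < 5) (hb0 : b ≠ 0)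
    (h : gkDist i 0 a b ≤ 1) : a = i ∧ (b = 1 ∨ b = 4) := by
  unfold gkDist c5Dist at h
  split_ifs at h <;> omega

section Gk

variable {k : ℕ}

theorem Gk_adj_of_succ (i : Fin (3 * k)) {j j' : Fin 5} (h : (j.val + 1) % 5 = j'.val) :
    (Gk k).Adj (i, j) (i, j') := by
  refine ⟨fun he => ?_, Or.inl (Or.inl ⟨rfl, h⟩)⟩
  have := Fin.val_eq_of_eq (Prod.mk.inj he).2
  omega

theorem Gk_adj_of_val_add_one {i i' : Fin (3 * k)} (h : i.val + 1 = i'.val) :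
    (Gk k).Adj (i, 1) (i', 4) := by
  refine ⟨fun he => ?_, Or.inl (Or.inr ⟨h, rfl, rfl⟩)⟩
  have := Fin.val_eq_of_eq (Prod.mk.inj he).1
  omega

theorem Gk_reachable_pentagon (i : Fin (3 * k)) (j : Fin 5) : (Gk k).Reachable (i, 0) (i, j) := by
  suffices ∀ n (hn : n < 5), (Gk k).Reachable (i, 0) (i, ⟨n, hn⟩) from this j j.isLt
  intro n
  induction n with
  | zero => exact fun _ => .rfl
  | succ n ih =>
    exact fun hn => (ih (by omega)).trans (Gk_adj_of_succ i (Nat.mod_eq_of_lt hn)).reachable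

theorem Gk_reachable_of_val_add_one {i i' : Fin (3 * k)} (h : i.val + 1 = i'.val) :
    (Gk k).Reachable (i, 0) (i', 0) :=
  (Gk_reachable_pentagon i 1).trans <|
    (Gk_adj_of_val_add_one h).reachable.trans (Gk_reachable_pentagon i' 4).symm

theorem Gk_reachable_of_le {i i' : Fin (3 * k)} (h : i ≤ i') : (Gk k).Reachable (i, 0) (i', 0) := by
  obtain ⟨n, hn⟩ := Nat.exists_eq_add_of_le (Fin.le_def.1 h)
  induction n generalizing i' with
  | zero => exact Fin.ext hn.symm ▸ .rfl
  | succ n ih =>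
    let i'' : Fin (3 * k) := ⟨i + n, by omega⟩
    exact (ih (i' := i'') (Nat.le_add_right _ _) rfl).trans
      (Gk_reachable_of_val_add_one hn.symm)

theorem Gk_preconnected (k : ℕ) : (Gk k).Preconnected := by
  have key : ∀ u v : Fin (3 * k) × Fin 5, u.1 ≤ v.1 → (Gk k).Reachable u v := fun u v h =>
    (Gk_reachable_pentagon u.1 u.2).symm.trans <|
      (Gk_reachable_of_le h).trans (Gk_reachable_pentagon v.1 v.2)
  intro u v
  rcases le_total u.1 v.1 with h | h
  · exact key u v h
  · exact (key v u h).symm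

theorem gkDist_le_dist (u v : Fin (3 * k) × Fin 5) :
    gkDist u.1 u.2 v.1 v.2 ≤ (Gk k).dist u v := by
  have hf : ∀ x y, (Gk k).Adj x y → gkDist x.1 x.2 v.1 v.2 ≤ gkDist y.1 y.2 v.1 v.2 + 1 := by
    intro x y h
    rcases h.2 with h | h <;> rw [pentRel, Fin.ext_iff] at h
    · exact (gkDist_le_succ_of_step x.2.isLt y.2.isLt v.2.isLt h).1
    · exact (gkDist_le_succ_of_step y.2.isLt x.2.isLt v.2.isLt h).2
  simpa [gkDist_self] using (Gk_preconnected k u v).apply_le_apply_add_dist hf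

theorem card_filter_gkDist_le (v : Fin (3 * k) × Fin 5) {r : ℕ} (hr : 1 ≤ r) :
    #{u : Fin (3 * k) × Fin 5 | gkDist v.1 v.2 u.1 u.2 ≤ r ∧ u.2.val ≠ 0} ≤ 3 * r := by
  set s := ({u : Fin (3 * k) × Fin 5 | gkDist v.1 v.2 u.1 u.2 ≤ r ∧ u.2.val ≠ 0} : Finset _)
  -- `b_i` and `e_i` are 3 apart on the path but only 2 apart through `a_i`.
  by_cases hc : v.2.val = 0 ∧ r = 1
  · have hs : s ⊆ {(v.1, 1), (v.1, 4)} := by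
      intro u hu
      obtain ⟨hd, hu0⟩ := (mem_filter.1 hu).2
      rw [hc.1, hc.2] at hd
      obtain ⟨h₁, h₂⟩ := eq_and_of_gkDist_zero_le_one u.2.isLt hu0 hd
      simp only [mem_insert, mem_singleton, Prod.ext_iff, Fin.ext_iff]
      omega
    calc #s ≤ 2 := (card_le_card hs).trans card_le_two
      _ ≤ 3 * r := by omega
  have hinj : Set.InjOn (fun u : Fin (3 * k) × Fin 5 => spineIndex u.1 u.2) s := by
    intro u hu u' hu' he
    have := (mem_filter.1 hu).2.2
    have := (mem_filter.1 hu').2.2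
    have := u.2.isLt
    have := u'.2.isLt
    simp only [spineIndex] at he
    ext <;> omega
  calc #s = #(s.image fun u => spineIndex u.1 u.2) := (card_image_of_injOn hinj).symm
    _ ≤ 3 * r - 1 + 1 := by
      refine card_le_succ_of_forall_le_add _ _ ?_
      simp only [mem_image, forall_exists_index, and_imp, forall_apply_eq_imp_iff₂]
      intro u hu u' hu'
      obtain ⟨hd, hu0⟩ := (mem_filter.1 hu).2
      obtain ⟨hd', hu0'⟩ := (mem_filter.1 hu').2
      exact spineIndex_le_add_of_gkDist_le v.2.isLt u.2.isLt u'.2.isLt hu0 hu0' hc hd hd'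
    _ = 3 * r := by omega

noncomputable def gkWeight (x : Fin (3 * k) × Fin 5) : ℝ := if x.2.val = 0 then 0 else 1 / 3

theorem sum_gkWeight_eq_card_div (s : Finset (Fin (3 * k) × Fin 5)) :
    ∑ u ∈ s, gkWeight u = #{u ∈ s | u.2.val ≠ 0} / 3 := by
  simp only [gkWeight]
  rw [sum_ite, sum_const_zero, zero_add, sum_const, nsmul_eq_mul, mul_one_div]

theorem isFracMP_gkWeight (k : ℕ) : IsFracMP (Gk k) gkWeight := by
  refine ⟨fun x => by unfold gkWeight; positivity, fun v r hr => ?_⟩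
  have hsub : {u ∈ univ.filter (fun u => (Gk k).dist v u ≤ r) | u.2.val ≠ 0} ⊆
      ({u : Fin (3 * k) × Fin 5 | gkDist v.1 v.2 u.1 u.2 ≤ r ∧ u.2.val ≠ 0} : Finset _) := by
    intro u hu
    simp only [mem_filter, mem_univ, true_and] at hu ⊢
    exact ⟨(gkDist_le_dist v u).trans hu.1, hu.2⟩
  have hcard := (card_le_card hsub).trans (card_filter_gkDist_le v hr)
  rw [sum_gkWeight_eq_card_div, div_le_iff₀ (by norm_num)]
  exact_mod_cast hcard.trans (le_of_eq (mul_comm 3 r))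

theorem sum_gkWeight (k : ℕ) : ∑ x : Fin (3 * k) × Fin 5, gkWeight x = 4 * k := by
  simp only [gkWeight, Fintype.sum_prod_type, Fin.sum_univ_five]
  norm_num
  ring

end Gk

theorem Gk_fractional_multipacking_general (k : ℕ) :
    IsFracMP (Gk k) (fun x => if x.2.val = 0 then (0 : ℝ) else 1 / 3) ∧
    (∑ x : Fin (3*k) × Fin 5,
      (if x.2.val = 0 then (0 : ℝ) else 1 / 3)) = 4 * k ∧
    (4 * k : ℝ) ≤ mpf (Gk k) :=
  ⟨isFracMP_gkWeight k, sum_gkWeight k, sum_gkWeight k ▸ (isFracMP_gkWeight k).sum_le_mpf⟩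

theorem Gk_fractional_multipacking (k : ℕ) (hk : 1 ≤ k) :
    IsFracMP (Gk k) (fun x => if x.2.val = 0 then (0 : ℝ) else 1 / 3) ∧
    (∑ x : Fin (3*k) × Fin 5,
      (if x.2.val = 0 then (0 : ℝ) else 1 / 3)) = 4 * k ∧
    (4 * k : ℝ) ≤ mpf (Gk k) :=
  Gk_fractional_multipacking_general k
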